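/- arXiv:math/0601291 — 5 statements merged into one kernel-verified Lean document; each statement's English description precedes it below -/
import Mathlib

section
/- Fix τ ∈ ℂ and define Q(z) = exp(zτ), ⟨z⟩ = Q(z) - Q(-z). For weights a = (a₁, a₂) and b = (b₁, b₂) with a₁, b₁ ∈ ℕ and a₂, b₂ ∈ ℂ, define S'(a,b) = Q(-(2a₂+a₁+1)(2b₂+b₁+1)) · (⟨(a₁+1)(b₁+1)⟩/⟨b₁+1⟩) · ⟨b₂⟩ · ⟨b₂+b₁+1⟩ and d(a) = ⟨a₁+1⟩/(⟨1⟩·⟨a₂⟩·⟨a₂+a₁+1⟩). Then, whenever all the brackets appearing in the denominators are nonzero, d(b)·S'(a,b) = d(a)·S'(b,a). -/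
theorem stmt_3 (τ : ℂ)
    (Q : ℂ → ℂ) (hQ : ∀ z, Q z = Complex.exp (z * τ))
    (br : ℂ → ℂ) (hbr : ∀ z, br z = Q z - Q (-z))
    (a₁ b₁ : ℕ) (a₂ b₂ : ℂ)
    (S' : (ℕ × ℂ) → (ℕ × ℂ) → ℂ)
    (hS' : ∀ (c₁ d₁ : ℕ) (c₂ d₂ : ℂ),
      S' (c₁, c₂) (d₁, d₂) =
        Q (-(2 * c₂ + c₁ + 1) * (2 * d₂ + d₁ + 1)) *
          (br ((c₁ + 1) * (d₁ + 1)) / br (d₁ + 1)) * br d₂ * br (d₂ + d₁ + 1))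
    (d : (ℕ × ℂ) → ℂ)
    (hd : ∀ (c₁ : ℕ) (c₂ : ℂ),
      d (c₁, c₂) = br (c₁ + 1) / (br 1 * br c₂ * br (c₂ + c₁ + 1)))
    (h1 : br 1 ≠ 0) (ha1 : br (a₁ + 1) ≠ 0) (hb1 : br (b₁ + 1) ≠ 0)
    (ha2 : br a₂ ≠ 0) (hb2 : br b₂ ≠ 0)
    (ha3 : br (a₂ + a₁ + 1) ≠ 0) (hb3 : br (b₂ + b₁ + 1) ≠ 0) :
    d (b₁, b₂) * S' (a₁, a₂) (b₁, b₂) = d (a₁, a₂) * S' (b₁, b₂) (a₁, a₂) := by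
  rw [hd, hd, hS', hS']
  have hQsym : Q (-(2 * a₂ + a₁ + 1) * (2 * b₂ + b₁ + 1))
      = Q (-(2 * b₂ + b₁ + 1) * (2 * a₂ + a₁ + 1)) := by ring_nf
  have hbrsym : br ((a₁ + 1 : ℂ) * (b₁ + 1)) = br ((b₁ + 1 : ℂ) * (a₁ + 1)) := by
    rw [mul_comm]
  rw [hQsym, hbrsym]
  field_simp
end

section
/- Let α₁, …, α_n ∈ ℂ be such that (1, α₁, …, α_n) is linearly independent over ℚ. Then the ring homomorphism φ : ℤ[q^{±1}, q₁^{±1}, …, q_n^{±1}] → ℂ[[h]] determined by φ(q) = exp(h/2) and φ(q_i) = exp(α_i·h/2) is injective. -/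
/-- The formal exponential power series `exp(c·h) = ∑ cⁿ hⁿ / n!`. -/
noncomputable def expSeries' (c : ℂ) : PowerSeries ℂ :=
  PowerSeries.mk fun n => c ^ n / (n.factorial : ℂ)

/-!
As a map of abelian groups, `φ` sends the standard `ℤ`-basis of monomials to the series
`exp(c_k h)` with `c_k = (k₀ + ∑ kᵢ αᵢ) / 2`, so it suffices that these series are linearly
independent. The `ℚ`-independence of `(1, α)` makes `k ↦ c_k` injective, and exponential series
with distinct exponents are `ℂ`-linearly independent: up to the factor `m!`, the coefficients of
`exp(c h)` form the character `m ↦ cᵐ` of the monoid `ℕ`, and distinct characters are linearly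
independent by Dedekind's lemma.
-/

theorem Module.Basis.injective_of_linearIndependent_comp {ι R M M' : Type*} [Semiring R]
    [AddCommMonoid M] [Module R M] [AddCommMonoid M'] [Module R M'] (b : Module.Basis ι R M)
    {f : M →ₗ[R] M'} (hf : LinearIndependent R (f ∘ b)) : Function.Injective f := by
  rw [← b.constr_self ℕ f]
  exact b.injective_constr_of_linearIndependent hf

theorem Finsupp.linearCombination_fin_cons {R M : Type*} [Semiring R] [AddCommMonoid M]
    [Module R M] {n : ℕ} (x : M) (v : Fin n → M) (k : Fin (n + 1) →₀ R) :
    linearCombination R (Fin.cons x v : Fin (n + 1) → M) k = k 0 • x + ∑ i, k i.succ • v i := by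
  simp [linearCombination_apply, sum_fintype, Fin.sum_univ_succ]

theorem linearIndependent_expSeries' : LinearIndependent ℂ expSeries' := by
  let S : PowerSeries ℂ →ₗ[ℂ] Multiplicative ℕ → ℂ :=
    LinearMap.pi fun m => (m.toAdd.factorial : ℂ) • PowerSeries.coeff m.toAdd
  refine LinearIndependent.of_comp S ?_
  have hS : S ∘ expSeries' = (fun χ : Multiplicative ℕ →* ℂ => ⇑χ) ∘ powersHom ℂ := by
    ext c m
    simp [S, expSeries', mul_div_cancel₀, Nat.factorial_ne_zero]
  rw [hS]
  exact (linearIndependent_monoidHom _ ℂ).comp _ (powersHom ℂ).injective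

theorem stmt_5 (n : ℕ) (α : Fin n → ℂ)
    (hα : LinearIndependent ℚ (Fin.cons 1 α : Fin (n + 1) → ℂ))
    (φ : AddMonoidAlgebra ℤ (Fin (n + 1) →₀ ℤ) →+* PowerSeries ℂ)
    (hφ : ∀ k : Fin (n + 1) →₀ ℤ,
      φ (AddMonoidAlgebra.single k 1) =
        expSeries' ((k 0 + ∑ i : Fin n, (k i.succ : ℂ) * α i) / 2)) :
    Function.Injective φ := by
  let exponent (k : Fin (n + 1) →₀ ℤ) : ℂ := (k 0 + ∑ i : Fin n, (k i.succ : ℂ) * α i) / 2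
  have hexponent : Function.Injective exponent := by
    intro k k' hkk'
    apply (hα.restrict_scalars' ℤ).finsuppLinearCombination_injective
    simpa [exponent, Finsupp.linearCombination_fin_cons, zsmul_eq_mul] using hkk'
  have hli : LinearIndependent ℤ (expSeries' ∘ exponent) :=
    (linearIndependent_expSeries'.comp exponent hexponent).restrict_scalars' ℤ
  refine (AddMonoidAlgebra.basis _ ℤ).injective_of_linearIndependent_comp
    (f := φ.toAddMonoidHom.toIntLinearMap) ?_
  have hbasis : φ.toAddMonoidHom.toIntLinearMap ∘ AddMonoidAlgebra.basis _ ℤ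
      = expSeries' ∘ exponent := by
    ext k : 1
    simp [hφ, exponent]
  rwa [hbasis]
end

section
/- Let R = ℤ[q^{±1}, q₁^{±1}, q₂^{±1}] and suppose P₁, P₂ ∈ R satisfy (q₂ - q₂^{-1})(q₂q - q₂^{-1}q^{-1})·P₁ = (q₁ - q₁^{-1})(q₁q - q₁^{-1}q^{-1})·P₂. Then (q₁ - q₁^{-1})(q₁q - q₁^{-1}q^{-1}) divides P₁ in R. -/
/-!
Over `S = ℤ[q^{±1}, q₁^{±1}]`, view everything as Laurent polynomials in `q₂`. The right-hand
factor is a constant `A ∈ S`, while the left-hand factor equals the unit `q q₂⁻²` times the monic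
polynomial `(q₂² - 1)(q₂² - q⁻²)`. Since division with remainder by a monic `g` is unique,
`(C A · s) /ₘ g = C A · (s /ₘ g)`, so `C A ∣ g P` forces `C A ∣ P`; multiplying by powers of `q₂`
moves this from polynomials to Laurent polynomials.
-/

open scoped Polynomial LaurentPolynomial

theorem Polynomial.Monic.C_dvd_of_C_dvd_mul {R : Type*} [CommRing R] {g p : R[X]} (hg : g.Monic)
    {a : R} (h : C a ∣ g * p) : C a ∣ p := by
  nontriviality R
  obtain ⟨s, hs⟩ := h
  have hdiv : C a * s /ₘ g = C a * (s /ₘ g) := by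
    refine (div_modByMonic_unique _ (C a * (s %ₘ g)) hg ⟨?_, ?_⟩).1
    · conv_rhs => rw [← modByMonic_add_div s g]
      ring
    · rw [C_mul']
      exact (degree_smul_le a _).trans_lt (degree_modByMonic_lt s hg)
  exact ⟨s /ₘ g, by rw [← hdiv, ← hs, mul_divByMonic_cancel_left p hg]⟩

namespace LaurentPolynomial

open Polynomial (X toLaurent toLaurent_X toLaurent_X_pow toLaurent_C toLaurent_injective
  monic_X_pow_sub_C)

variable {R : Type*} [CommRing R]

theorem exists_C_dvd_mul_X_pow_of_C_dvd_toLaurent {a : R} {f : R[X]}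
    (h : C a ∣ toLaurent f) : ∃ k : ℕ, Polynomial.C a ∣ f * X ^ k := by
  obtain ⟨s, hs⟩ := h
  obtain ⟨k, s', hs'⟩ := exists_T_pow s
  refine ⟨k, s', toLaurent_injective ?_⟩
  rw [map_mul, map_mul, hs, toLaurent_X_pow, toLaurent_C, hs', mul_assoc]

theorem C_dvd_of_C_dvd_toLaurent_mul {g : R[X]} (hg : g.Monic) {a : R} {p : R[T;T⁻¹]}
    (h : C a ∣ toLaurent g * p) : C a ∣ p := by
  obtain ⟨n, p', hp'⟩ := exists_T_pow p
  have hgp : C a ∣ toLaurent (g * p') := by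
    rw [map_mul, hp', ← mul_assoc]
    exact h.mul_right _
  obtain ⟨k, hk⟩ := exists_C_dvd_mul_X_pow_of_C_dvd_toLaurent hgp
  rw [mul_assoc] at hk
  have hpT := map_dvd toLaurent (hg.C_dvd_of_C_dvd_mul hk)
  rw [toLaurent_C, map_mul, hp', toLaurent_X_pow, mul_assoc] at hpT
  exact ((isUnit_T _).mul (isUnit_T _)).dvd_mul_right.mp hpT

theorem T_sub_T_neg_mul_eq_C_mul_T_mul_toLaurent {c c' : R} (hc : c * c' = 1) :
    (T 1 - T (-1)) * (T 1 * C c - T (-1) * C c') =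
      C c * T (-2) * toLaurent ((X ^ 2 - 1) * (X ^ 2 - Polynomial.C (c' ^ 2)) : R[X]) := by
  have hT : (T 1 : R[T;T⁻¹]) * T (-1) = 1 := by rw [← T_add]; simp
  have hC : C c * C c' = 1 := by rw [← map_mul, hc, map_one]
  have hTm2 : (T (-2) : R[T;T⁻¹]) = T (-1) ^ 2 := by rw [T_pow]; simp
  simp only [map_mul, map_sub, map_pow, map_one, toLaurent_X, toLaurent_C, hTm2]
  linear_combination
    (-((C c * T 1 ^ 2 - C c * C c' ^ 2 - C c) * (T 1 * T (-1) + 1) + C c' + C c)) * hT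
      + (-(T (-1) ^ 2 * C c' - C c')) * hC

theorem C_dvd_of_T_sub_T_neg_mul_eq {c c' A : R} (hc : c * c' = 1) {P₁ P₂ : R[T;T⁻¹]}
    (h : (T 1 - T (-1)) * (T 1 * C c - T (-1) * C c') * P₁ = C A * P₂) : C A ∣ P₁ := by
  have hmonic : ((X ^ 2 - 1) * (X ^ 2 - Polynomial.C (c' ^ 2)) : R[X]).Monic :=
    (monic_X_pow_sub_C 1 two_ne_zero).mul (monic_X_pow_sub_C _ two_ne_zero)
  have hunit : IsUnit (C c * T (-2) : R[T;T⁻¹]) :=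
    ((IsUnit.of_mul_eq_one c' hc).map C).mul (isUnit_T _)
  refine C_dvd_of_C_dvd_toLaurent_mul hmonic (hunit.dvd_mul_left.mp ⟨P₂, ?_⟩)
  rw [← mul_assoc, ← T_sub_T_neg_mul_eq_C_mul_T_mul_toLaurent hc, h]

end LaurentPolynomial

open LaurentPolynomial in
theorem stmt_6
    (q qi q₁ q₁i q₂ q₂i P₁ P₂ :
      LaurentPolynomial (LaurentPolynomial (LaurentPolynomial ℤ)))
    (hq : q = LaurentPolynomial.C (LaurentPolynomial.C (LaurentPolynomial.T 1)))
    (hqi : qi = LaurentPolynomial.C (LaurentPolynomial.C (LaurentPolynomial.T (-1))))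
    (hq₁ : q₁ = LaurentPolynomial.C (LaurentPolynomial.T 1))
    (hq₁i : q₁i = LaurentPolynomial.C (LaurentPolynomial.T (-1)))
    (hq₂ : q₂ = LaurentPolynomial.T 1)
    (hq₂i : q₂i = LaurentPolynomial.T (-1))
    (h : (q₂ - q₂i) * (q₂ * q - q₂i * qi) * P₁ =
          (q₁ - q₁i) * (q₁ * q - q₁i * qi) * P₂) :
    (q₁ - q₁i) * (q₁ * q - q₁i * qi) ∣ P₁ := by
  subst hq hqi hq₁ hq₁i hq₂ hq₂i
  have hq_mul_qi : C (T 1) * C (T (-1)) = (1 : LaurentPolynomial (LaurentPolynomial ℤ)) := by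
    rw [← map_mul, ← T_add, add_neg_cancel, T_zero, map_one]
  have hA : (C (T 1) - C (T (-1))) * (C (T 1) * C (C (T 1)) - C (T (-1)) * C (C (T (-1)))) =
      C (((T 1 - T (-1)) * (T 1 * C (T 1) - T (-1) * C (T (-1))) :
        LaurentPolynomial (LaurentPolynomial ℤ))) := by
    simp only [map_mul, map_sub]
  rw [hA] at h ⊢
  exact C_dvd_of_T_sub_T_neg_mul_eq hq_mul_qi h
end

section
/- Let P ∈ ℂ[t₁^{±1}, …, t_n^{±1}] be a Laurent polynomial such that for every tuple (a₁, …, a_n) ∈ ℕⁿ, the one-variable Laurent polynomial P(t^{2^{a₁}}, …, t^{2^{a_n}}) ∈ ℂ[t^{±1}] is zero. Then P = 0. -/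
/-!
Take `a i = B * i` with `2 ^ B` larger than twice `|d i|` for every exponent `d` of `P`. Then
`d ↦ ∑ i, d i * 2 ^ (B * i)` reads `d` as a base-`2 ^ B` expansion; differences of two exponents
of `P` have signed digits below `2 ^ B`, so this map is injective on them and the substitution
only relabels the monomials of `P`.
-/

open Finset

theorem Int.eq_zero_of_sum_mul_pow_eq_zero {b : ℤ} :
    ∀ {n : ℕ} (e : Fin n → ℤ), (∀ i, |e i| < b) → ∑ i, e i * b ^ (i : ℕ) = 0 → e = 0
  | 0, e, _, _ => Subsingleton.elim e 0
  | n + 1, e, he, hsum => by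
    rw [Fin.sum_univ_succ] at hsum
    have hb : 0 < b := (abs_nonneg _).trans_lt (he 0)
    set tail := ∑ i : Fin n, e i.succ * b ^ (i : ℕ)
    have hshift : ∑ i : Fin n, e i.succ * b ^ ((i.succ : Fin (n + 1)) : ℕ) = b * tail := by
      simp only [tail, Finset.mul_sum, Fin.val_succ, pow_succ]
      exact Finset.sum_congr rfl fun _ _ => by ring
    rw [hshift, Fin.val_zero, pow_zero, mul_one] at hsum
    have hhead : e 0 = 0 :=
      Int.eq_zero_of_abs_lt_dvd ⟨-tail, by linarith⟩ (he 0)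
    have htail : e ∘ Fin.succ = 0 :=
      eq_zero_of_sum_mul_pow_eq_zero _ (fun i => he i.succ)
        (by simpa [hhead, hb.ne'] using hsum)
    ext i
    cases i using Fin.cases with
    | zero => exact hhead
    | succ i => exact congrFun htail i

theorem exists_injOn_sum_mul_two_pow {n : ℕ} (S : Finset (Fin n →₀ ℤ)) :
    ∃ a : Fin n → ℕ, Set.InjOn (fun d : Fin n →₀ ℤ => ∑ i, d i * (2 ^ a i : ℤ)) S := by
  obtain ⟨C, hC⟩ : ∃ C : ℕ, ∀ d ∈ S, ∀ i, |d i| ≤ C :=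
    ⟨S.sup fun d => univ.sup fun i => (d i).natAbs, fun d hd i => by
      rw [Int.abs_eq_natAbs, Nat.cast_le]
      exact (le_sup (f := fun i => (d i).natAbs) (mem_univ i)).trans
        (le_sup (f := fun d : Fin n →₀ ℤ => univ.sup fun i => (d i).natAbs) hd)⟩
  obtain ⟨B, hB⟩ : ∃ B : ℕ, (2 * C : ℤ) < 2 ^ B := pow_unbounded_of_one_lt _ one_lt_two
  refine ⟨fun i => B * i, fun d hd d' hd' heq => ?_⟩
  have hdigits : ∀ i, |(d - d') i| < 2 ^ B := fun i => by
    have := abs_sub (d i) (d' i)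
    have := hC d hd i
    have := hC d' hd' i
    rw [Finsupp.sub_apply]
    linarith
  have hsum : ∑ i : Fin n, (d - d') i * ((2 : ℤ) ^ B) ^ (i : ℕ) = 0 := by
    simp only [Finsupp.sub_apply, sub_mul, sum_sub_distrib, ← pow_mul]
    exact sub_eq_zero.mpr heq
  exact sub_eq_zero.mp (DFunLike.coe_injective
    (Int.eq_zero_of_sum_mul_pow_eq_zero _ hdigits hsum))

theorem AddMonoidAlgebra.eq_zero_of_mapDomain_eq_zero {R M N : Type*} [Semiring R] {f : M → N}
    {x : AddMonoidAlgebra R M} (hf : Set.InjOn f x.coeff.support) (hx : mapDomain f x = 0) :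
    x = 0 := by
  ext a
  by_contra ha
  have hmem : a ∈ x.coeff.support := Finsupp.mem_support_iff.mpr ha
  apply ha
  rw [← Finsupp.mapDomain_apply' _ x.coeff subset_rfl hf hmem]
  simpa using congrArg (fun y => y.coeff (f a)) hx

theorem LaurentPolynomial.sum_C_mul_T_eq_mapDomain {R M : Type*} [Semiring R] (f : M → ℤ)
    (x : AddMonoidAlgebra R M) :
    (x.coeff.sum fun d c => C c * T (f d)) = AddMonoidAlgebra.mapDomain f x := by
  ext
  simp [← single_eq_C_mul_T, Finsupp.mapDomain]

theorem stmt_9 (n : ℕ) (P : AddMonoidAlgebra ℂ (Fin n →₀ ℤ))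
    (h : ∀ a : Fin n → ℕ,
      (Finsupp.sum P.coeff fun d c =>
          LaurentPolynomial.C c *
            LaurentPolynomial.T (∑ i : Fin n, d i * (2 ^ (a i) : ℤ))) = 0) :
    P = 0 := by
  obtain ⟨a, ha⟩ := exists_injOn_sum_mul_two_pow P.coeff.support
  refine AddMonoidAlgebra.eq_zero_of_mapDomain_eq_zero ha ?_
  rw [← LaurentPolynomial.sum_C_mul_T_eq_mapDomain]
  exact h a
end

section
/- Fix τ ∈ ℂ and a, b ∈ ℂ with ⟨a⟩ ≠ 0, ⟨b+1⟩ ≠ 0 and ⟨a+b+1⟩ ≠ 0, where Q(z) = exp(zτ) and ⟨z⟩ = Q(z) - Q(-z). Then Q(2ab+a+b) · [ Q(-a)·Q(2ab)/(⟨a+b+1⟩·⟨a⟩) + Q(b+1)·Q(2(a+1)(b+1))/(⟨a+b+1⟩·⟨b+1⟩) - Q(2a(b+1))/(⟨a⟩·⟨b+1⟩) ] = Q(4ab+2a+2b+1). -/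
set_option maxHeartbeats 1000000 in
theorem stmt_11 (τ a b : ℂ)
    (Q : ℂ → ℂ) (hQ : ∀ z, Q z = Complex.exp (z * τ))
    (br : ℂ → ℂ) (hbr : ∀ z, br z = Q z - Q (-z))
    (ha : br a ≠ 0) (hb : br (b + 1) ≠ 0) (hab : br (a + b + 1) ≠ 0) :
    Q (2 * a * b + a + b) *
      (Q (-a) * Q (2 * a * b) / (br (a + b + 1) * br a) +
        Q (b + 1) * Q (2 * (a + 1) * (b + 1)) / (br (a + b + 1) * br (b + 1)) -
        Q (2 * a * (b + 1)) / (br a * br (b + 1))) =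
      Q (4 * a * b + 2 * a + 2 * b + 1) := by
  have key : ∀ z w : ℂ, Complex.exp ((z + w) * τ)
      = Complex.exp (z * τ) * Complex.exp (w * τ) := by
    intro z w; rw [add_mul, Complex.exp_add]
  set X := Complex.exp (a * τ) with hX
  set Y := Complex.exp (b * τ) with hY
  set U := Complex.exp (a * b * τ) with hU
  set T := Complex.exp (1 * τ) with hT
  have hXne : X ≠ 0 := Complex.exp_ne_zero _
  have hYne : Y ≠ 0 := Complex.exp_ne_zero _
  have hUne : U ≠ 0 := Complex.exp_ne_zero _
  have hTne : T ≠ 0 := Complex.exp_ne_zero _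
  have eQ : ∀ z : ℂ, Q z = Complex.exp (z * τ) := hQ
  have q1 : Q (2 * a * b + a + b) = U * U * X * Y := by
    rw [hQ, show (2*a*b+a+b : ℂ) = a*b + (a*b + (a + b)) by ring, key, key, key]; ring
  have q2 : Q (-a) = 1 / X := by
    rw [hQ, neg_mul, Complex.exp_neg, inv_eq_one_div]
  have q3 : Q (2 * a * b) = U * U := by
    rw [hQ, show (2*a*b : ℂ) = a*b + a*b by ring, key]
  have q4 : Q (b + 1) = Y * T := by
    rw [hQ, key]
  have q5 : Q (2 * (a + 1) * (b + 1)) = U * U * X * X * Y * Y * T * T := by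
    rw [hQ, show (2*(a+1)*(b+1) : ℂ) = a*b + (a*b + (a + (a + (b + (b + (1 + 1)))))) by ring,
      key, key, key, key, key, key, key]; ring
  have q6 : Q (2 * a * (b + 1)) = U * U * X * X := by
    rw [hQ, show (2*a*(b+1) : ℂ) = a*b + (a*b + (a + a)) by ring, key, key, key]; ring
  have q7 : Q (4 * a * b + 2 * a + 2 * b + 1) = U * U * U * U * X * X * Y * Y * T := by
    rw [hQ, show (4*a*b+2*a+2*b+1 : ℂ)
      = a*b + (a*b + (a*b + (a*b + (a + (a + (b + (b + 1))))))) by ring,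
      key, key, key, key, key, key, key, key]; ring
  have b1 : br a = X - X⁻¹ := by
    rw [hbr, hQ, hQ, neg_mul, Complex.exp_neg]
  have b2 : br (b + 1) = Y * T - (Y * T)⁻¹ := by
    rw [hbr, hQ, hQ, neg_mul, Complex.exp_neg, key]
  have b3 : br (a + b + 1) = X * Y * T - (X * Y * T)⁻¹ := by
    rw [hbr, hQ, hQ, neg_mul, Complex.exp_neg, key, key, mul_assoc]
  have e1 : br a = (X * X - 1) / X := by rw [b1]; field_simp
  have e2 : br (b + 1) = (Y * Y * T * T - 1) / (Y * T) := by
    rw [b2]; field_simp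
  have e3 : br (a + b + 1) = (X * X * Y * Y * T * T - 1) / (X * Y * T) := by
    rw [b3]; field_simp
  rw [e1, div_ne_zero_iff] at ha
  rw [e2, div_ne_zero_iff] at hb
  rw [e3, div_ne_zero_iff] at hab
  have hP2 : X * X - 1 ≠ 0 := ha.1
  have hP3 : Y * Y * T * T - 1 ≠ 0 := hb.1
  have hP1 : X * X * Y * Y * T * T - 1 ≠ 0 := hab.1
  clear_value X Y U T
  have t1 : Q (-a) * Q (2 * a * b) / (br (a + b + 1) * br a)
      = U * U * X * Y * T / ((X * X * Y * Y * T * T - 1) * (X * X - 1)) := by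
    rw [q2, q3, e3, e1]
    field_simp
  have t2 : Q (b + 1) * Q (2 * (a + 1) * (b + 1)) / (br (a + b + 1) * br (b + 1))
      = U * U * X * X * X * Y ^ 5 * T ^ 5 /
        ((X * X * Y * Y * T * T - 1) * (Y * Y * T * T - 1)) := by
    rw [q4, q5, e3, e2]
    field_simp
  have t3 : Q (2 * a * (b + 1)) / (br a * br (b + 1))
      = U * U * X * X * X * Y * T / ((X * X - 1) * (Y * Y * T * T - 1)) := by
    rw [q6, e1, e2]
    field_simp
  rw [q1, q7, t1, t2, t3,
    div_add_div _ _ (mul_ne_zero hP1 hP2) (mul_ne_zero hP1 hP3),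
    div_sub_div _ _ (mul_ne_zero (mul_ne_zero hP1 hP2) (mul_ne_zero hP1 hP3))
      (mul_ne_zero hP2 hP3),
    ← mul_div_assoc,
    div_eq_iff (mul_ne_zero (mul_ne_zero (mul_ne_zero hP1 hP2) (mul_ne_zero hP1 hP3))
      (mul_ne_zero hP2 hP3))]
  ring
end
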